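/- arXiv:2504.13470 — 6 statements merged into one kernel-verified Lean document; each statement's English description precedes it below -/
import Mathlib

section
/- Let A be a unital C*-algebra, T ∈ A, and suppose there exists S₀ ∈ A with S₀T = R, where R is a projection satisfying TR = T (a right support projection for T). Then T*T is invertible in the corner RAR, i.e., there exists S₁ ∈ RAR with S₁(T*T) = (T*T)S₁ = R. -/
/-!
Since `R` is a projection and `S₀ T = R`, we get
`R = (S₀ T)* (S₀ T) = T* (S₀* S₀) T ≤ ‖S₀* S₀‖ T* T`. Hence `T* T + (1 - R)` dominates a positive
multiple of `1` and is invertible in `A`. It commutes with `R`, so `R` times its inverse is the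
inverse of `T* T` in the corner `R A R`.
-/

theorem IsIdempotentElem.exists_corner_inverse_of_isUnit_add_one_sub {α : Type*} [Ring α]
    {a p : α} (hp : IsIdempotentElem p) (hap : a * p = a) (hpa : p * a = a)
    (hu : IsUnit (a + (1 - p))) : ∃ b : α, p * b * p = b ∧ b * a = p ∧ a * b = p := by
  obtain ⟨u, hu⟩ := hu
  have hup : (u : α) * p = a := by rw [hu, add_mul, hap, hp.one_sub_mul_self, add_zero]
  have hpu : p * (u : α) = a := by rw [hu, mul_add, hpa, hp.mul_one_sub_self, add_zero]
  have hcomm : Commute p (↑u⁻¹ : α) := Commute.units_inv_right (hup.trans hpu.symm).symm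
  refine ⟨p * ↑u⁻¹, ?_, ?_, ?_⟩
  · rw [← mul_assoc, hp.eq, mul_assoc, ← hcomm.eq, ← mul_assoc, hp.eq]
  · rw [← hup, mul_assoc, u.inv_mul_cancel_left, hp.eq]
  · rw [hcomm.eq, ← hpu, mul_assoc, u.mul_inv_cancel_left, hp.eq]

section CStarAlgebra

variable {A : Type*} [CStarAlgebra A] [PartialOrder A] [StarOrderedRing A]

theorem IsStarProjection.le_norm_smul_star_mul_self_of_mul_eq {p S T : A}
    (hp : IsStarProjection p) (h : S * T = p) : p ≤ ‖star S * S‖ • (star T * T) :=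
  calc p = star p * p := by rw [hp.isSelfAdjoint.star_eq, hp.isIdempotentElem.eq]
    _ = star T * (star S * S) * T := by rw [← h, star_mul]; simp only [mul_assoc]
    _ ≤ ‖star S * S‖ • (star T * T) := CStarAlgebra.star_left_conjugate_le_norm_smul

theorem IsStarProjection.isUnit_add_one_sub_of_le_smul {a p : A} {c : ℝ}
    (hp : IsStarProjection p) (ha : 0 ≤ a) (hc : 0 ≤ c) (hpa : p ≤ c • a) :
    IsUnit (a + (1 - p)) := by
  have hc' : 1 + c ≠ 0 := by positivity
  have hone : (1 : A) ≤ (1 + c) • (a + (1 - p)) :=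
    calc (1 : A) = p + (1 - p) := (add_sub_cancel p 1).symm
      _ ≤ (1 + c) • a + (1 + c) • (1 - p) := by
        gcongr
        · exact hpa.trans (smul_le_smul_of_nonneg_right (by linarith) ha)
        · exact le_smul_of_one_le_left hp.one_sub_nonneg (by linarith)
      _ = (1 + c) • (a + (1 - p)) := (smul_add _ _ _).symm
  rw [← isUnit_smul_iff (Units.mk0 _ hc'), Units.smul_mk0]
  exact CStarAlgebra.isUnit_of_le 1 hone

end CStarAlgebra

/-- If `T` in a unital C*-algebra has a right support projection `R` (i.e. `T * R = T`)
and `S₀ * T = R` for some `S₀`, then `T* T` is invertible in the corner `R A R`. -/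
theorem stmt0 {A : Type*} [CStarAlgebra A] (T S₀ R : A)
    (hRsa : IsSelfAdjoint R) (hRidem : IsIdempotentElem R)
    (hTR : T * R = T) (hS₀ : S₀ * T = R) :
    ∃ S₁ : A, R * S₁ * R = S₁ ∧ S₁ * (star T * T) = R ∧ (star T * T) * S₁ = R := by
  let := CStarAlgebra.spectralOrder A
  have := CStarAlgebra.spectralOrderedRing A
  have hR : IsStarProjection R := ⟨hRidem, hRsa⟩
  have hRT : R * star T = star T := by
    simpa only [star_mul, hRsa.star_eq] using congrArg star hTR
  refine hRidem.exists_corner_inverse_of_isUnit_add_one_sub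
    (by rw [mul_assoc, hTR]) (by rw [← mul_assoc, hRT]) ?_
  exact hR.isUnit_add_one_sub_of_le_smul (star_mul_self_nonneg T) (norm_nonneg _)
    (hR.le_norm_smul_star_mul_self_of_mul_eq hS₀)
end

section
/- Let V be a bounded linear operator on a Hilbert space H that is an isometry but not unitary (V*V = I and VV* < I). Then for every bounded operator A with ‖A‖ < 1, the operator V − A is not surjective (equivalently, its range is not dense, i.e., its left support projection is strictly less than I). -/
variable {H : Type*} [NormedAddCommGroup H] [InnerProductSpace ℂ H] [CompleteSpace H]

/-! The range of `V - A` is closed because `V - A` is bounded below by `1 - ‖A‖`, so a dense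
range would make it surjective. Then `V⋆` is injective: `V⋆ (V - A) = 1 - V⋆ A` is injective since
`‖V⋆ A‖ < 1`. But an injective left inverse of `V` is a two-sided inverse, so `V V⋆ = 1`. -/

theorem AntilipschitzWith.surjective_of_denseRange {α β : Type*} [PseudoEMetricSpace α]
    [EMetricSpace β] [CompleteSpace α] {K : NNReal} {f : α → β} (hf : AntilipschitzWith K f)
    (hfc : UniformContinuous f) (hd : DenseRange f) : Function.Surjective f := by
  rw [← Set.range_eq_univ, ← (hf.isClosed_range hfc).closure_eq]
  exact hd.closure_range

namespace ContinuousLinearMap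

variable {𝕜 E F : Type*} [NontriviallyNormedField 𝕜] [NormedAddCommGroup E]
  [NormedAddCommGroup F] [NormedSpace 𝕜 E] [NormedSpace 𝕜 F]

theorem norm_le_one_of_norm_map {V : E →L[𝕜] F} (hV : ∀ x, ‖V x‖ = ‖x‖) : ‖V‖ ≤ 1 :=
  opNorm_le_bound _ zero_le_one fun x => by rw [hV, one_mul]

theorem sub_norm_mul_norm_le_norm_sub_apply {V : E →L[𝕜] F} (hV : ∀ x, ‖V x‖ = ‖x‖)
    (A : E →L[𝕜] F) (x : E) : (1 - ‖A‖) * ‖x‖ ≤ ‖(V - A) x‖ :=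
  calc (1 - ‖A‖) * ‖x‖ = ‖V x‖ - ‖A‖ * ‖x‖ := by rw [hV]; ring
    _ ≤ ‖V x‖ - ‖A x‖ := by gcongr; exact A.le_opNorm x
    _ ≤ ‖(V - A) x‖ := norm_sub_norm_le _ _

theorem antilipschitzWith_sub_of_norm_map {V : E →L[𝕜] F} (hV : ∀ x, ‖V x‖ = ‖x‖)
    {A : E →L[𝕜] F} (hA : ‖A‖ < 1) : AntilipschitzWith (1 - ‖A‖₊)⁻¹ (V - A) := by
  refine (V - A).antilipschitz_of_bound fun x => ?_
  have hA' : ‖A‖₊ ≤ 1 := hA.le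
  rw [NNReal.coe_inv, NNReal.coe_sub hA', NNReal.coe_one, coe_nnnorm,
    inv_mul_eq_div, le_div_iff₀ (by linarith), mul_comm]
  exact sub_norm_mul_norm_le_norm_sub_apply hV A x

theorem injective_one_sub_of_norm_lt_one {B : E →L[𝕜] E} (hB : ‖B‖ < 1) :
    Function.Injective ⇑(1 - B) := by
  refine (injective_iff_map_eq_zero (1 - B)).mpr fun x hx => norm_le_zero_iff.mp ?_
  have hBx : B x = x := (sub_eq_zero.mp hx).symm
  have : ‖x‖ ≤ ‖B‖ * ‖x‖ := by simpa only [hBx] using B.le_opNorm x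
  nlinarith [norm_nonneg x]

theorem mul_eq_one_of_mul_eq_one_of_injective {R M : Type*} [Semiring R] [TopologicalSpace M]
    [AddCommMonoid M] [Module R M] {W V : M →L[R] M} (h : W * V = 1) (hW : Function.Injective W) :
    V * W = 1 := by
  have hleft : Function.LeftInverse W V := fun x => congr($h x)
  ext y
  exact hleft.rightInverse_of_injective hW y

end ContinuousLinearMap

theorem stmt1_general (V A : H →L[ℂ] H) (hiso : star V * V = 1)
    (hne : V * star V ≠ 1) (hA : ‖A‖ < 1) :
    ¬ DenseRange ⇑(V - A) := by
  intro hd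
  have hV : ∀ x, ‖V x‖ = ‖x‖ :=
    V.norm_map_iff_adjoint_comp_self.mpr <| by
      rw [← ContinuousLinearMap.star_eq_adjoint]; exact hiso
  have hsurj : Function.Surjective (V - A) :=
    (ContinuousLinearMap.antilipschitzWith_sub_of_norm_map hV hA).surjective_of_denseRange
      (V - A).uniformContinuous hd
  have hcomp : star V * (V - A) = 1 - star V * A := by rw [mul_sub, hiso]
  have hnorm : ‖star V * A‖ < 1 :=
    calc ‖star V * A‖ ≤ ‖V‖ * ‖A‖ := by rw [← norm_star V]; exact norm_mul_le _ _
      _ ≤ 1 * ‖A‖ := by gcongr; exact ContinuousLinearMap.norm_le_one_of_norm_map hV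
      _ < 1 := by rwa [one_mul]
  have hinj : Function.Injective ⇑(star V) := by
    refine Function.Injective.of_comp_right (g := ⇑(V - A)) ?_ hsurj
    change Function.Injective ⇑(star V * (V - A))
    rw [hcomp]
    exact ContinuousLinearMap.injective_one_sub_of_norm_lt_one hnorm
  exact hne (ContinuousLinearMap.mul_eq_one_of_mul_eq_one_of_injective hiso hinj)

/-- If `V` is a non-unitary isometry on a Hilbert space and `‖A‖ < 1`, then `V - A`
does not have dense range (so in particular it is not surjective). -/
theorem stmt1 (V A : H →L[ℂ] H) (hiso : star V * V = 1)
    (hle : V * star V ≤ 1) (hne : V * star V ≠ 1) (hA : ‖A‖ < 1) :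
    ¬ DenseRange ⇑(V - A) :=
  stmt1_general V A hiso hne hA
end

section
/- Let A be a unital C*-algebra, E a projection in A, and T ∈ A with E T* T E ≥ a² E for some a > 0. Then there exists a positive element S ∈ EAE such that TS is a partial isometry with (TS)*(TS) = E. -/
/-!
The element `X = E T* T E + a² (1 - E)` dominates `a² • 1`, so it is strictly positive, and it
commutes with `E`; hence so does `R = X^(-1/2)`, and `R X R = 1`. Take `S = E R E`. Since `S`
lies in the corner, `S T* T S = S (E X E) S = E (R X R) E = E`.
-/

namespace IsIdempotentElem

variable {R : Type*} [Ring R] {e : R}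

lemma mul_corner_mul (he : IsIdempotentElem e) (x : R) : e * (e * x * e) * e = e * x * e := by
  simp only [mul_assoc, he.mul_self_mul, he.eq]

lemma corner_mul_corner_mul_corner (he : IsIdempotentElem e) (r x : R) :
    e * r * e * (e * x * e) * (e * r * e) = e * r * e * x * (e * r * e) := by
  simp only [mul_assoc, he.mul_self_mul]

lemma corner_conj_eq_self_of_commute (he : IsIdempotentElem e) {r x : R} (hre : Commute r e)
    (hrxr : r * x * r = 1) : e * r * e * x * (e * r * e) = e := by
  have hl : e * r * e = e * r := by rw [mul_assoc, hre.eq, ← mul_assoc, he.eq]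
  have hr : e * r * e = r * e := by rw [← hre.eq, mul_assoc, he.eq]
  calc e * r * e * x * (e * r * e) = e * (r * x * r) * e := by
        nth_rw 2 [hr]; rw [hl]; simp only [mul_assoc]
    _ = e := by rw [hrxr, mul_one, he.eq]

variable {𝕜 : Type*} [CommSemiring 𝕜] [Algebra 𝕜 R]

lemma commute_corner_add_smul_one_sub (he : IsIdempotentElem e) (x : R) (c : 𝕜) :
    Commute (e * x * e + c • (1 - e)) e := by
  refine Commute.add_left ?_ (((Commute.one_left e).sub_left (Commute.refl e)).smul_left c)
  simp only [Commute, SemiconjBy, mul_assoc, he.eq, he.mul_self_mul]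

lemma corner_add_smul_one_sub (he : IsIdempotentElem e) (x : R) (c : 𝕜) :
    e * (e * x * e + c • (1 - e)) * e = e * x * e := by
  rw [mul_add, add_mul, he.mul_corner_mul, mul_smul_comm, smul_mul_assoc, he.mul_one_sub_self,
    zero_mul, smul_zero, add_zero]

end IsIdempotentElem

/-- If `E` is a projection in a unital C*-algebra and `E T* T E ≥ a² E` for some `a > 0`,
then there is a positive `S` in the corner `E A E` such that `T S` is a partial isometry
with `(T S)* (T S) = E`. -/
theorem stmt3 {A : Type*} [CStarAlgebra A] [PartialOrder A] [StarOrderedRing A]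
    (T E : A) (a : ℝ) (ha : 0 < a)
    (hEsa : IsSelfAdjoint E) (hEidem : IsIdempotentElem E)
    (hTE : a ^ 2 • E ≤ E * (star T * T) * E) :
    ∃ S : A, E * S * E = S ∧ 0 ≤ S ∧ star (T * S) * (T * S) = E := by
  set X := E * (star T * T) * E + a ^ 2 • (1 - E)
  have hX : IsStrictlyPositive X := by
    refine (isStrictlyPositive_one.smul (pow_pos ha 2)).of_le ?_
    calc a ^ 2 • (1 : A) = a ^ 2 • E + a ^ 2 • (1 - E) := by rw [← smul_add, add_sub_cancel]
      _ ≤ X := add_le_add_left hTE _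
  set R := X ^ (-(1 / 2) : ℝ)
  have hRE : Commute R E := (hEidem.commute_corner_add_smul_one_sub _ _).cfc_nnreal _
  have hS : 0 ≤ E * R * E := hEsa.conjugate_nonneg CFC.rpow_nonneg
  refine ⟨E * R * E, hEidem.mul_corner_mul R, hS, ?_⟩
  calc star (T * (E * R * E)) * (T * (E * R * E))
      = E * R * E * (star T * T) * (E * R * E) := by
        rw [star_mul, hS.isSelfAdjoint.star_eq]; simp only [mul_assoc]
    _ = E * R * E * (E * X * E) * (E * R * E) := by
      rw [hEidem.corner_add_smul_one_sub, hEidem.corner_mul_corner_mul_corner]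
    _ = E := by
      rw [hEidem.corner_mul_corner_mul_corner]
      exact hEidem.corner_conj_eq_self_of_commute hRE (CFC.conjugate_rpow_neg_one_half X hX)
end

section
/- Let E and F be projections on a Hilbert space with E ∨ F = I. Then E − F is invertible if and only if E ∧ F = 0 and there exist bounded operators A, B with EA + FB = I. -/
/-!
If `E - F` is invertible with inverse `U`, then `E U + F (-U) = 1`, and `E - F` vanishes on
`ran E ∩ ran F`. Conversely, the hypotheses make `ran E` and `ran F` closed algebraic complements,
so the bounded projection `R` onto `ran E` along `ran F` satisfies `R (E - F) = E`. Taking adjoints,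
`(E - F) R* = E` and `(E - F) (R* - 1) = F`, hence `(E - F) (R* A + (R* - 1) B) = 1`; a
self-adjoint element with a right inverse is invertible.
-/

open LinearMap (range)

section StarMonoid

variable {R : Type*} [Monoid R] [StarMul R]

theorem IsSelfAdjoint.isUnit_of_mul_eq_one {t s : R} (ht : IsSelfAdjoint t) (h : t * s = 1) :
    IsUnit t := by
  have hleft : star s * t = 1 := by
    simpa [ht.star_eq] using congrArg star h
  have hs : star s = s := by
    calc star s = star s * (t * s) := by rw [h, mul_one]
      _ = s := by rw [← mul_assoc, hleft, one_mul]
  exact ⟨⟨t, s, h, hs ▸ hleft⟩, rfl⟩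

end StarMonoid

section StarRing

variable {R : Type*} [Ring R] [StarRing R]

theorem isUnit_sub_of_mul_sub_eq_of_mul_add_mul_eq_one {p q r a b : R} (hp : IsSelfAdjoint p)
    (hq : IsSelfAdjoint q) (hr : r * (p - q) = p) (hab : p * a + q * b = 1) :
    IsUnit (p - q) := by
  have hp' : (p - q) * star r = p := by
    simpa [(hp.sub hq).star_eq, hp.star_eq] using congrArg star hr
  have hq' : (p - q) * (star r - 1) = q := by
    rw [mul_sub, hp', mul_one, sub_sub_cancel]
  refine (hp.sub hq).isUnit_of_mul_eq_one (s := star r * a + (star r - 1) * b) ?_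
  rw [mul_add, ← mul_assoc, ← mul_assoc, hp', hq', hab]

end StarRing

theorem exists_mul_add_mul_eq_one_of_isUnit_sub {R : Type*} [Ring R] {p q : R}
    (h : IsUnit (p - q)) : ∃ a b : R, p * a + q * b = 1 :=
  ⟨↑h.unit⁻¹, -↑h.unit⁻¹, by rw [mul_neg, ← sub_eq_add_neg, ← sub_mul, IsUnit.mul_val_inv]⟩

namespace ContinuousLinearMap

section TopologicalModule

variable {R M : Type*} [Ring R] [TopologicalSpace M] [AddCommGroup M] [Module R M]
  [IsTopologicalAddGroup M]

theorem range_inf_range_eq_bot_of_isUnit_sub {P Q : M →L[R] M} (hP : IsIdempotentElem P)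
    (hQ : IsIdempotentElem Q) (h : IsUnit (P - Q)) :
    range (P : M →ₗ[R] M) ⊓ range (Q : M →ₗ[R] M) = ⊥ := by
  rw [Submodule.eq_bot_iff]
  rintro x ⟨hxP, hxQ⟩
  have hPx : P x = x :=
    (LinearMap.IsIdempotentElem.mem_range_iff (IsIdempotentElem.toLinearMap hP)).mp hxP
  have hQx : Q x = x :=
    (LinearMap.IsIdempotentElem.mem_range_iff (IsIdempotentElem.toLinearMap hQ)).mp hxQ
  calc x = ((↑h.unit⁻¹ : M →L[R] M) * (P - Q)) x := by rw [h.val_inv_mul]; rfl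
    _ = 0 := by rw [mul_apply_eq_comp, sub_apply, hPx, hQx, sub_self, map_zero]

theorem codisjoint_range_of_mul_add_mul_eq_one {P Q A B : M →L[R] M} (h : P * A + Q * B = 1) :
    Codisjoint (range (P : M →ₗ[R] M)) (range (Q : M →ₗ[R] M)) := by
  rw [codisjoint_iff, eq_top_iff]
  intro x _
  rw [Submodule.mem_sup]
  exact ⟨P (A x), ⟨A x, rfl⟩, Q (B x), ⟨B x, rfl⟩, by simpa using congr($h x)⟩

end TopologicalModule

theorem exists_mul_sub_eq_of_isCompl_range {𝕜 X : Type*} [NontriviallyNormedField 𝕜]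
    [NormedAddCommGroup X] [NormedSpace 𝕜 X] [CompleteSpace X] {P Q : X →L[𝕜] X}
    (hP : IsIdempotentElem P) (hQ : IsIdempotentElem Q)
    (h : IsCompl (range (P : X →ₗ[𝕜] X)) (range (Q : X →ₗ[𝕜] X))) :
    ∃ R : X →L[𝕜] X, R * (P - Q) = P := by
  have hPQ := Submodule.IsCompl.isTopCompl_of_isClosed h (IsIdempotentElem.isClosed_range hP)
    (IsIdempotentElem.isClosed_range hQ)
  refine ⟨Submodule.projectionL _ _ hPQ, ext fun x => ?_⟩
  have hPx : Submodule.projectionL _ _ hPQ (P x) = P x :=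
    Submodule.projectionL_apply_left hPQ ⟨P x, x, rfl⟩
  have hQx : Submodule.projectionL _ _ hPQ (Q x) = 0 :=
    Submodule.projectionL_apply_right hPQ ⟨Q x, x, rfl⟩
  rw [mul_apply_eq_comp, sub_apply, map_sub, hPx, hQx, sub_zero]

end ContinuousLinearMap

variable {H : Type*} [NormedAddCommGroup H] [InnerProductSpace ℂ H] [CompleteSpace H]

theorem stmt7_general (E F : H →L[ℂ] H)
    (hEsa : IsSelfAdjoint E) (hEidem : IsIdempotentElem E)
    (hFsa : IsSelfAdjoint F) (hFidem : IsIdempotentElem F) :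
    IsUnit (E - F) ↔
      (LinearMap.range (E : H →ₗ[ℂ] H) ⊓ LinearMap.range (F : H →ₗ[ℂ] H) = ⊥ ∧
        ∃ A B : H →L[ℂ] H, E * A + F * B = 1) := by
  refine ⟨fun h => ⟨ContinuousLinearMap.range_inf_range_eq_bot_of_isUnit_sub hEidem hFidem h,
    exists_mul_add_mul_eq_one_of_isUnit_sub h⟩, ?_⟩
  rintro ⟨hinf, A, B, hAB⟩
  obtain ⟨R, hR⟩ := ContinuousLinearMap.exists_mul_sub_eq_of_isCompl_range hEidem hFidem
    ⟨disjoint_iff.mpr hinf, ContinuousLinearMap.codisjoint_range_of_mul_add_mul_eq_one hAB⟩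
  exact isUnit_sub_of_mul_sub_eq_of_mul_add_mul_eq_one hEsa hFsa hR hAB

/-- For projections `E`, `F` with `E ∨ F = 1`: `E - F` is invertible iff `E ∧ F = 0`
and `E A + F B = 1` for some bounded operators `A`, `B`. -/
theorem stmt7 (E F : H →L[ℂ] H)
    (hEsa : IsSelfAdjoint E) (hEidem : IsIdempotentElem E)
    (hFsa : IsSelfAdjoint F) (hFidem : IsIdempotentElem F)
    (hjoin : (LinearMap.range (E : H →ₗ[ℂ] H) ⊔ LinearMap.range (F : H →ₗ[ℂ] H)).topologicalClosure = ⊤) :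
    IsUnit (E - F) ↔
      (LinearMap.range (E : H →ₗ[ℂ] H) ⊓ LinearMap.range (F : H →ₗ[ℂ] H) = ⊥ ∧
        ∃ A B : H →L[ℂ] H, E * A + F * B = 1) :=
  stmt7_general E F hEsa hEidem hFsa hFidem
end

section
/- Let T be a bounded operator on a Hilbert space H and E a projection such that: (a) E T* T E ≥ a₁² E and E^⊥ T* T E^⊥ ≥ a₂² E^⊥ for some a₁, a₂ > 0, and (b) the difference of the range projections of TE and TE^⊥ is invertible on the closure of the range of T. Then T is left invertible, i.e., there exists S with ST = I. -/
/-!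
Write `P`, `Q`, `L` for the range projections of `T E`, `T E^⊥`, `T`, and let `S (P - Q) = L`.
Every `p` in the range of `T E` equals `S (p - Q p)`, and `p - Q p` is no longer than `p + q`
for any `q` in the range of `T E^⊥`, so `‖p‖ ≤ ‖S‖ ‖p + q‖`; the same holds with the roles
swapped (use `-S`). Applied to `T x = T E x + T E^⊥ x` and combined with the lower bounds
`aᵢ` from (a), this bounds `T` below, and then `T* T` is invertible.
-/
variable {H : Type*} [NormedAddCommGroup H] [InnerProductSpace ℂ H] [CompleteSpace H]

/-- The orthogonal projection onto the closure of the range of a bounded operator. -/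
noncomputable def rangeProj (T : H →L[ℂ] H) : H →L[ℂ] H :=
  (LinearMap.range (T : H →ₗ[ℂ] H)).topologicalClosure.subtypeL ∘L
    Submodule.orthogonalProjectionOnto (LinearMap.range (T : H →ₗ[ℂ] H)).topologicalClosure

open scoped InnerProductSpace

theorem exists_mul_eq_one_of_norm_le_mul_norm {𝕜 E : Type*} [RCLike 𝕜] [NormedAddCommGroup E]
    [InnerProductSpace 𝕜 E] [CompleteSpace E] {T : E →L[𝕜] E} {C : ℝ}
    (h : ∀ x, ‖x‖ ≤ C * ‖T x‖) : ∃ S, S * T = 1 := by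
  set D := max C 1
  have hD : 0 < D := lt_max_of_lt_right one_pos
  have hunit : IsUnit (star T * T) := by
    refine ContinuousLinearMap.isUnit_of_forall_le_norm_inner_map _
      (c := (D ^ 2)⁻¹.toNNReal) (Real.toNNReal_pos.mpr (by positivity)) fun x => ?_
    have hx : ‖x‖ ≤ D * ‖T x‖ := (h x).trans (by gcongr; exact le_max_left _ _)
    rw [Real.coe_toNNReal _ (by positivity), mul_apply_eq_comp,
      ContinuousLinearMap.star_eq_adjoint, ContinuousLinearMap.adjoint_inner_left,
      inner_self_eq_norm_sq_to_K, norm_pow, RCLike.norm_ofReal, abs_norm, ← div_eq_mul_inv,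
      div_le_iff₀ (by positivity), ← mul_pow, mul_comm]
    gcongr
  obtain ⟨U, hU⟩ := hunit
  exact ⟨↑U⁻¹ * star T, by rw [mul_assoc, ← hU, Units.inv_mul]⟩

theorem mul_norm_le_norm_apply_of_smul_le {W T : H →L[ℂ] H} (hW : IsStarProjection W) {a : ℝ}
    (ha : 0 ≤ a) (h : a ^ 2 • W ≤ W * (star T * T) * W) (x : H) : a * ‖W x‖ ≤ ‖T (W x)‖ := by
  have hself (y : H) : ⟪W y, x⟫_ℂ = ⟪y, W x⟫_ℂ := by
    rw [← ContinuousLinearMap.adjoint_inner_right, ← ContinuousLinearMap.star_eq_adjoint,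
      hW.isSelfAdjoint.star_eq]
  have hTT : RCLike.re ⟪(W * (star T * T) * W) x, x⟫_ℂ = ‖T (W x)‖ ^ 2 := by
    rw [mul_apply_eq_comp, mul_apply_eq_comp, hself, mul_apply_eq_comp,
      ContinuousLinearMap.star_eq_adjoint, ContinuousLinearMap.adjoint_inner_left,
      inner_self_eq_norm_sq]
  have hWW : RCLike.re ⟪(a ^ 2 • W) x, x⟫_ℂ = a ^ 2 * ‖W x‖ ^ 2 := by
    have hWx : ⟪W x, x⟫_ℂ = ⟪W x, W x⟫_ℂ := by
      rw [← hself, ← mul_apply_eq_comp, hW.isIdempotentElem.eq]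
    rw [smul_apply, RCLike.real_smul_eq_coe_smul (K := ℂ), inner_smul_real_left, RCLike.smul_re,
      hWx, inner_self_eq_norm_sq]
  have hsq : (a * ‖W x‖) ^ 2 ≤ ‖T (W x)‖ ^ 2 := by
    have := h.re_inner_nonneg_left x
    rw [sub_apply, inner_sub_left, map_sub, hTT, hWW, sub_nonneg] at this
    linarith
  exact (pow_le_pow_iff_left₀ (by positivity) (norm_nonneg _) two_ne_zero).mp hsq

theorem rangeProj_apply_apply (A : H →L[ℂ] H) (x : H) : rangeProj A (A x) = A x :=
  Submodule.starProjection_eq_self_iff.mpr (Submodule.le_topologicalClosure _ ⟨x, rfl⟩)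

theorem norm_sub_rangeProj_apply_le_norm_add (A : H →L[ℂ] H) (y z : H) :
    ‖y - rangeProj A y‖ ≤ ‖y + A z‖ := by
  set K := (LinearMap.range (A : H →ₗ[ℂ] H)).topologicalClosure
  have hmem : A (-z) ∈ K := Submodule.le_topologicalClosure _ ⟨-z, rfl⟩
  calc ‖y - rangeProj A y‖ ≤ ‖y - A (-z)‖ :=
        (Submodule.starProjection_minimal y).trans_le
          (ciInf_le ⟨0, Set.forall_mem_range.mpr fun _ => norm_nonneg _⟩ (⟨_, hmem⟩ : K))
    _ = ‖y + A z‖ := by rw [map_neg, sub_neg_eq_add]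

theorem norm_apply_le_opNorm_mul_norm_add {T E F S : H →L[ℂ] H}
    (hS : S * (rangeProj (T * E) - rangeProj (T * F)) = rangeProj T) (x y : H) :
    ‖T (E x)‖ ≤ ‖S‖ * ‖T (E x) + T (F y)‖ := by
  have hp : S (T (E x) - rangeProj (T * F) (T (E x))) = T (E x) := by
    have := congr($hS (T (E x)))
    rwa [mul_apply_eq_comp, sub_apply, rangeProj_apply_apply T, ← mul_apply_eq_comp T E,
      rangeProj_apply_apply] at this
  calc ‖T (E x)‖ = ‖S (T (E x) - rangeProj (T * F) (T (E x)))‖ := by rw [hp]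
    _ ≤ ‖S‖ * ‖T (E x) - rangeProj (T * F) (T (E x))‖ := S.le_opNorm _
    _ ≤ ‖S‖ * ‖T (E x) + T (F y)‖ := by
        gcongr; exact norm_sub_rangeProj_apply_le_norm_add (T * F) _ y

/-- If `E T* T E ≥ a₁² E`, `E^⊥ T* T E^⊥ ≥ a₂² E^⊥` and the difference of the range
projections of `T E` and `T E^⊥` is invertible in the corner determined by the range
projection of `T`, then `T` is left invertible. -/
theorem stmt8 (T E : H →L[ℂ] H)
    (hEsa : IsSelfAdjoint E) (hEidem : IsIdempotentElem E)
    (a₁ a₂ : ℝ) (ha₁ : 0 < a₁) (ha₂ : 0 < a₂)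
    (h1 : a₁ ^ 2 • E ≤ E * (star T * T) * E)
    (h2 : a₂ ^ 2 • (1 - E) ≤ (1 - E) * (star T * T) * (1 - E))
    (hb : ∃ S : H →L[ℂ] H, rangeProj T * S * rangeProj T = S ∧
      S * (rangeProj (T * E) - rangeProj (T * (1 - E))) = rangeProj T ∧
      (rangeProj (T * E) - rangeProj (T * (1 - E))) * S = rangeProj T) :
    ∃ S : H →L[ℂ] H, S * T = 1 := by
  obtain ⟨S, -, hS, -⟩ := hb
  have hS' : -S * (rangeProj (T * (1 - E)) - rangeProj (T * E)) = rangeProj T := by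
    rw [neg_mul, ← mul_neg, neg_sub, hS]
  have hE : IsStarProjection E := ⟨hEidem, hEsa⟩
  refine exists_mul_eq_one_of_norm_le_mul_norm (C := ‖S‖ * (a₁⁻¹ + a₂⁻¹)) fun x => ?_
  have hx : E x + (1 - E) x = x := by rw [sub_apply, one_apply_eq_self, add_sub_cancel]
  have hTx : T x = T (E x) + T ((1 - E) x) := by rw [← map_add, hx]
  have h₁ : a₁ * ‖E x‖ ≤ ‖S‖ * ‖T x‖ := hTx ▸
    (mul_norm_le_norm_apply_of_smul_le hE ha₁.le h1 x).trans
      (norm_apply_le_opNorm_mul_norm_add hS x x)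
  have h₂ : a₂ * ‖(1 - E) x‖ ≤ ‖S‖ * ‖T x‖ := by
    have := (mul_norm_le_norm_apply_of_smul_le hE.one_sub ha₂.le h2 x).trans
      (norm_apply_le_opNorm_mul_norm_add hS' x x)
    rwa [norm_neg, add_comm, ← hTx] at this
  calc ‖x‖ = ‖E x + (1 - E) x‖ := by rw [hx]
    _ ≤ ‖E x‖ + ‖(1 - E) x‖ := norm_add_le _ _
    _ ≤ ‖S‖ * ‖T x‖ / a₁ + ‖S‖ * ‖T x‖ / a₂ := by
        gcongr
        · exact (le_div_iff₀' ha₁).mpr h₁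
        · exact (le_div_iff₀' ha₂).mpr h₂
    _ = ‖S‖ * (a₁⁻¹ + a₂⁻¹) * ‖T x‖ := by ring
end

section
/- Let M be a von Neumann algebra, E a projection in M, T, A ∈ M with ‖A‖ < c and ‖(T + A)E‖ < c − ‖A‖ for some c > 0. Let F be the spectral projection of |T| for the interval [0, c]. Then E ∧ F^⊥ = 0, and consequently E is equivalent to a subprojection of F (E ≼ F). -/
/-!
If `x ∈ ran E` lies in the spectral subspace `ran F^⊥` of `|T|` for `(c, ∞)`, then
`c ‖x‖² ≤ re ⟪x, |T| x⟫ ≤ ‖x‖ ‖T x‖ = ‖x‖ ‖T E x‖`, while `‖T E‖ ≤ ‖(T + A) E‖ + ‖A‖ < c`;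
so `x = 0`, i.e. `E ∧ F^⊥ = 0`.

For `E ≼ F`, take the polar decomposition `W = V |W|` of `W = F E`. Since `E ∧ F^⊥ = 0`,
`ker W = ker E`, so the initial projection `V* V` of `V`, the projection onto `(ker W)ᗮ`, is `E`;
its final space lies in the closure of the range of `W`, which is inside `ran F`.
`V` commutes with the commutant of `M`, hence lies in `M`.
-/

variable {H : Type*} [NormedAddCommGroup H] [InnerProductSpace ℂ H] [CompleteSpace H]

/-- The absolute value `|T| = (T* T)^{1/2}` of a bounded operator. -/
noncomputable def absCLM (T : H →L[ℂ] H) : H →L[ℂ] H :=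
  cfc Real.sqrt (star T * T)

/-- The spectral projection of a self-adjoint operator `X` for the interval `(c, ∞)`,
realized as the range projection of `f(X)` where `f x = max (x - c) 0`. -/
noncomputable def specGT (X : H →L[ℂ] H) (c : ℝ) : H →L[ℂ] H :=
  rangeProj (cfc (fun x : ℝ => max (x - c) 0) X)

/-- `P` is a finite projection relative to the von Neumann algebra `M`: any partial
isometry in `M` from `P` onto a subprojection of `P` is onto `P` itself. -/
def FiniteProj (M : VonNeumannAlgebra H) (P : H →L[ℂ] H) : Prop :=
  ∀ V ∈ M, star V * V = P → P * (V * star V) = V * star V → V * star V = P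

/-- The norm-closed two-sided ideal of `M` generated by the finite projections of `M`
(the "compact" operators relative to `M`). -/
noncomputable def cptIdeal (M : VonNeumannAlgebra H) : Set (H →L[ℂ] H) :=
  closure (Submodule.span ℂ {x : H →L[ℂ] H | ∃ a ∈ M, ∃ b ∈ M, ∃ P ∈ M,
    IsSelfAdjoint P ∧ IsIdempotentElem P ∧ FiniteProj M P ∧ x = a * P * b} :
      Set (H →L[ℂ] H))

open ContinuousLinearMap Submodule
open scoped InnerProductSpace


lemma absCLM_eq_abs (W : H →L[ℂ] H) : absCLM W = CFC.abs W := by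
  rw [absCLM, CFC.abs, CFC.sqrt_eq_real_sqrt _ (star_mul_self_nonneg W), cfcₙ_eq_cfc]

lemma isSelfAdjoint_absCLM (W : H →L[ℂ] H) : IsSelfAdjoint (absCLM W) :=
  absCLM_eq_abs W ▸ (CFC.abs_nonneg W).isSelfAdjoint

lemma absCLM_mul_self (W : H →L[ℂ] H) : absCLM W * absCLM W = star W * W :=
  absCLM_eq_abs W ▸ CFC.abs_mul_abs W

lemma norm_absCLM_apply (W : H →L[ℂ] H) (x : H) : ‖absCLM W x‖ = ‖W x‖ := by
  have h : ⟪absCLM W x, absCLM W x⟫_ℂ = ⟪W x, W x⟫_ℂ := by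
    rw [← adjoint_inner_right, ← star_eq_adjoint, (isSelfAdjoint_absCLM W).star_eq,
      ← mul_apply_eq_comp, absCLM_mul_self, mul_apply_eq_comp, star_eq_adjoint,
      adjoint_inner_right]
  rw [inner_self_eq_norm_sq_to_K, inner_self_eq_norm_sq_to_K] at h
  exact_mod_cast (sq_eq_sq₀ (norm_nonneg _) (norm_nonneg _)).mp (by exact_mod_cast h)

lemma ker_absCLM (W : H →L[ℂ] H) : (absCLM W).ker = W.ker := by
  ext x
  rw [LinearMap.mem_ker, LinearMap.mem_ker, coe_coe, coe_coe, ← norm_eq_zero, norm_absCLM_apply,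
    norm_eq_zero]

lemma topologicalClosure_range_absCLM (W : H →L[ℂ] H) :
    (absCLM W).range.topologicalClosure = W.kerᗮ := by
  rw [← ker_absCLM, orthogonal_ker, ← star_eq_adjoint, (isSelfAdjoint_absCLM W).star_eq]

lemma Commute.absCLM_right {u W : H →L[ℂ] H} (h : Commute W u) (h' : Commute W (star u)) :
    Commute u (absCLM W) :=
  absCLM_eq_abs W ▸ h.cfcAbs_right h'

lemma range_mem_invtSubmodule_of_commute {R E : Type*} [Semiring R] [AddCommMonoid E]
    [TopologicalSpace E] [Module R E] {u G : E →L[R] E} (h : Commute G u) :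
    G.range ∈ Module.End.invtSubmodule (u : E →ₗ[R] E) := by
  rw [Module.End.mem_invtSubmodule_iff_forall_mem_of_mem]
  rintro _ ⟨x, rfl⟩
  exact ⟨u x, by simpa using congr($h x)⟩

lemma isStarProjection_rangeProj (G : H →L[ℂ] H) : IsStarProjection (rangeProj G) :=
  isStarProjection_starProjection

lemma range_rangeProj (G : H →L[ℂ] H) : (rangeProj G).range = G.range.topologicalClosure :=
  range_starProjection _

namespace VonNeumannAlgebra

variable (M : VonNeumannAlgebra H)

lemma cfc_mem {a : H →L[ℂ] H} (ha : a ∈ M) (f : ℝ → ℝ) : cfc f a ∈ M := by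
  rw [← M.commutant_commutant, mem_commutant_iff]
  exact fun u hu ↦ (Commute.cfc_real (mem_commutant_iff.mp hu a ha) f).symm

lemma absCLM_mem {W : H →L[ℂ] H} (hW : W ∈ M) : absCLM W ∈ M :=
  M.cfc_mem (mul_mem (star_mem hW) hW) _

lemma rangeProj_mem {G : H →L[ℂ] H} (hG : G ∈ M) : rangeProj G ∈ M := by
  rw [IsStarProjection.mem_iff (isStarProjection_rangeProj G), range_rangeProj]
  exact fun u hu ↦ topologicalClosure_mem_invtSubmodule
    (range_mem_invtSubmodule_of_commute (mem_commutant_iff.mp hu G hG))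

end VonNeumannAlgebra

section SpectralBound

variable {X : H →L[ℂ] H} (c : ℝ)

lemma mul_norm_sq_le_re_inner_of_mem_range_cfc (hX : IsSelfAdjoint X) {x : H}
    (hx : x ∈ (cfc (fun t : ℝ ↦ max (t - c) 0) X).range) :
    c * ‖x‖ ^ 2 ≤ RCLike.re ⟪x, X x⟫_ℂ := by
  obtain ⟨y, rfl⟩ := hx
  set g : ℝ → ℝ := fun t ↦ max (t - c) 0
  set G := cfc g X
  have hfactor : cfc (fun t ↦ g t * ((t - c) * g t)) X = G * ((X - algebraMap ℝ _ c) * G) := by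
    rw [cfc_mul .., cfc_mul .., cfc_sub .., cfc_id' .., cfc_const ..]
  have hpos : 0 ≤ G * ((X - algebraMap ℝ _ c) * G) := by
    refine hfactor ▸ cfc_nonneg fun t _ ↦ ?_
    rcases le_total t c with h | h
    · simp [g, max_eq_right (sub_nonpos.mpr h)]
    · simp only [g, max_eq_left (sub_nonneg.mpr h)]
      positivity
  have h := ((nonneg_iff_isPositive _).mp hpos).re_inner_nonneg_right y
  have hGadj : adjoint G = G := (cfc_predicate g X : IsSelfAdjoint G).adjoint_eq
  rw [mul_apply_eq_comp, mul_apply_eq_comp, ← hGadj, adjoint_inner_right, hGadj, sub_apply,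
    inner_sub_right, ContinuousLinearMap.algebraMap_apply, map_sub, inner_smul_right_eq_smul,
    RCLike.smul_re, inner_self_eq_norm_sq] at h
  exact sub_nonneg.mp h

lemma mul_norm_sq_le_re_inner_of_mem_range_specGT (hX : IsSelfAdjoint X) {x : H}
    (hx : x ∈ (specGT X c).range) : c * ‖x‖ ^ 2 ≤ RCLike.re ⟪x, X x⟫_ℂ := by
  rw [specGT, range_rangeProj, ← SetLike.mem_coe, topologicalClosure_coe] at hx
  have hcl : IsClosed {x : H | c * ‖x‖ ^ 2 ≤ RCLike.re ⟪x, X x⟫_ℂ} :=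
    isClosed_le (by fun_prop) (by fun_prop)
  exact closure_minimal (fun x hx ↦ mul_norm_sq_le_re_inner_of_mem_range_cfc c hX hx) hcl hx

end SpectralBound

lemma inf_range_specGT_absCLM_eq_bot {E T : H →L[ℂ] H} {c : ℝ} (hE : IsIdempotentElem E)
    (hTE : ‖T * E‖ < c) : E.range ⊓ (specGT (absCLM T) c).range = ⊥ := by
  refine eq_bot_iff.mpr fun x ⟨hxE, hxP⟩ ↦ (Submodule.mem_bot ℂ).mpr ?_
  have hEx : E x = x := (LinearMap.IsIdempotentElem.mem_range_iff hE.toLinearMap).mp hxE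
  by_contra hx
  have hbound : c * ‖x‖ ^ 2 ≤ ‖T * E‖ * ‖x‖ ^ 2 :=
    calc c * ‖x‖ ^ 2 ≤ RCLike.re ⟪x, absCLM T x⟫_ℂ :=
          mul_norm_sq_le_re_inner_of_mem_range_specGT c (isSelfAdjoint_absCLM T) hxP
      _ ≤ ‖x‖ * ‖absCLM T x‖ := (RCLike.re_le_norm _).trans (norm_inner_le_norm _ _)
      _ = ‖x‖ * ‖(T * E) x‖ := by rw [norm_absCLM_apply, mul_apply_eq_comp, hEx]
      _ ≤ ‖x‖ * (‖T * E‖ * ‖x‖) := by gcongr; exact (T * E).le_opNorm x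
      _ = ‖T * E‖ * ‖x‖ ^ 2 := by ring
  exact hTE.not_ge (le_of_mul_le_mul_right hbound (by positivity))

section PolarDecomposition

variable (W : H →L[ℂ] H)

lemma absCLM_apply_mem_orthogonal_ker (x : H) : absCLM W x ∈ W.kerᗮ :=
  topologicalClosure_range_absCLM W ▸ le_topologicalClosure _ ⟨x, rfl⟩

noncomputable def absCLMCodRestrict : H →ₗ[ℂ] W.kerᗮ :=
  (absCLM W : H →ₗ[ℂ] H).codRestrict W.kerᗮ (absCLM_apply_mem_orthogonal_ker W)

lemma norm_absCLMCodRestrict_apply (x : H) : ‖absCLMCodRestrict W x‖ = ‖W x‖ :=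
  norm_absCLM_apply W x

lemma denseRange_absCLMCodRestrict : DenseRange (absCLMCodRestrict W) := by
  rw [DenseRange, Subtype.dense_iff, ← Set.range_comp]
  intro k hk
  rw [← topologicalClosure_range_absCLM, topologicalClosure_coe] at hk
  exact hk

noncomputable def polarIsometryOn : W.kerᗮ →L[ℂ] H :=
  (W : H →ₗ[ℂ] H).extendOfNorm (absCLMCodRestrict W)

lemma polarIsometryOn_absCLMCodRestrict (x : H) :
    polarIsometryOn W (absCLMCodRestrict W x) = W x :=
  LinearMap.extendOfNorm_eq (denseRange_absCLMCodRestrict W)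
    ⟨1, fun y ↦ by rw [one_mul, norm_absCLMCodRestrict_apply]; exact le_rfl⟩ x

lemma norm_polarIsometryOn_apply (k : W.kerᗮ) : ‖polarIsometryOn W k‖ = ‖k‖ := by
  refine (denseRange_absCLMCodRestrict W).induction_on k
    (isClosed_eq (by fun_prop) continuous_norm) fun x ↦ ?_
  rw [polarIsometryOn_absCLMCodRestrict, norm_absCLMCodRestrict_apply]

/-- The partial isometry `V` of the polar decomposition `W = V |W|`: the continuous extension of
`|W| x ↦ W x` from the dense subspace `ran |W|` of `(ker W)ᗮ`, and zero on `ker W`. -/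
noncomputable def polarIsometry : H →L[ℂ] H :=
  polarIsometryOn W ∘L W.kerᗮ.orthogonalProjectionOnto

lemma polarIsometry_apply_absCLM (x : H) : polarIsometry W (absCLM W x) = W x := by
  rw [polarIsometry, comp_apply, orthogonalProjectionOnto_mem_subspace_eq_self
    (⟨_, absCLM_apply_mem_orthogonal_ker W x⟩ : W.kerᗮ)]
  exact polarIsometryOn_absCLMCodRestrict W x

lemma polarIsometry_apply_of_mem_ker {z : H} (hz : z ∈ W.ker) : polarIsometry W z = 0 := by
  rw [← W.ker.orthogonal_orthogonal] at hz
  rw [polarIsometry, comp_apply, orthogonalProjectionOnto_apply_of_mem_orthogonal hz, map_zero]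

lemma star_polarIsometry_mul_self :
    star (polarIsometry W) * polarIsometry W = W.kerᗮ.starProjection := by
  let isometry : W.kerᗮ →ₗᵢ[ℂ] H := ⟨polarIsometryOn W, norm_polarIsometryOn_apply W⟩
  ext x
  refine ext_inner_right ℂ fun y ↦ ?_
  rw [mul_apply_eq_comp, star_eq_adjoint, adjoint_inner_left, polarIsometry, comp_apply,
    comp_apply]
  change ⟪isometry _, isometry _⟫_ℂ = _
  rw [LinearIsometry.inner_map_map, inner_orthogonalProjectionOnto_eq_of_mem_left,
    starProjection_apply]

lemma range_polarIsometry_le : (polarIsometry W).range ≤ W.range.topologicalClosure := by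
  rintro _ ⟨x, rfl⟩
  rw [← SetLike.mem_coe, topologicalClosure_coe]
  refine (denseRange_absCLMCodRestrict W).induction_on
    (p := fun k ↦ polarIsometryOn W k ∈ closure (W.range : Set H)) _
    (isClosed_closure.preimage (polarIsometryOn W).continuous) fun y ↦ ?_
  rw [polarIsometryOn_absCLMCodRestrict]
  exact subset_closure ⟨y, rfl⟩

end PolarDecomposition

lemma Commute.polarIsometry_right {W u : H →L[ℂ] H} (h : Commute W u)
    (h' : Commute W (star u)) : Commute u (polarIsometry W) := by
  have hK : ∀ k ∈ W.kerᗮ, u (polarIsometry W k) = polarIsometry W (u k) := by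
    rw [← topologicalClosure_range_absCLM]
    intro k hk
    rw [← SetLike.mem_coe, topologicalClosure_coe] at hk
    refine closure_minimal (t := {k | u (polarIsometry W k) = polarIsometry W (u k)}) ?_
      (isClosed_eq (by fun_prop) (by fun_prop)) hk
    rintro _ ⟨y, rfl⟩
    have hWu : W (u y) = u (W y) := congr($h.eq y)
    have hAu : absCLM W (u y) = u (absCLM W y) := congr($((h.absCLM_right h').eq) y).symm
    change u (polarIsometry W (absCLM W y)) = polarIsometry W (u (absCLM W y))
    rw [← hAu, polarIsometry_apply_absCLM, polarIsometry_apply_absCLM, hWu]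
  have hker : ∀ z ∈ W.ker, polarIsometry W z = 0 ∧ polarIsometry W (u z) = 0 := by
    intro z hz
    have hWuz : W (u z) = u (W z) := congr($h.eq z)
    refine ⟨polarIsometry_apply_of_mem_ker W hz, polarIsometry_apply_of_mem_ker W ?_⟩
    rw [LinearMap.mem_ker, coe_coe] at hz ⊢
    rw [hWuz, hz, map_zero]
  ext x
  set p := W.kerᗮ.starProjection x
  have hp : p ∈ W.kerᗮ := W.kerᗮ.starProjection_apply_mem x
  have hxp : x - p ∈ W.ker :=
    W.ker.orthogonal_orthogonal ▸ W.kerᗮ.sub_starProjection_mem_orthogonal x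
  obtain ⟨hV, hVu⟩ := hker _ hxp
  calc u (polarIsometry W x) = u (polarIsometry W p) + u (polarIsometry W (x - p)) := by
        rw [← map_add, ← map_add, add_sub_cancel]
    _ = polarIsometry W (u p) + polarIsometry W (u (x - p)) := by
        rw [hK p hp, hV, hVu, map_zero]
    _ = polarIsometry W (u x) := by rw [← map_add, ← map_add, add_sub_cancel]

lemma VonNeumannAlgebra.polarIsometry_mem (M : VonNeumannAlgebra H) {W : H →L[ℂ] H}
    (hW : W ∈ M) : polarIsometry W ∈ M := by
  rw [← M.commutant_commutant, mem_commutant_iff]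
  exact fun u hu ↦ (Commute.polarIsometry_right (mem_commutant_iff.mp hu W hW)
    (mem_commutant_iff.mp (star_mem hu) W hW)).eq

lemma ker_one_sub_mul_eq_ker_of_inf_range_eq_bot {R M : Type*} [Ring R] [AddCommGroup M]
    [TopologicalSpace M] [IsTopologicalAddGroup M] [Module R M] {E P : M →L[R] M}
    (h : E.range ⊓ P.range = ⊥) : ((1 - P) * E).ker = E.ker := by
  refine le_antisymm (fun x hx ↦ ?_) fun x hx ↦ by simp_all [LinearMap.mem_ker]
  have hEx : P (E x) = E x := (sub_eq_zero.mp hx).symm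
  have hmem : E x ∈ E.range ⊓ P.range := ⟨⟨x, rfl⟩, ⟨E x, hEx⟩⟩
  rwa [h, mem_bot] at hmem

lemma IsStarProjection.orthogonal_ker {𝕜 E : Type*} [RCLike 𝕜] [NormedAddCommGroup E]
    [InnerProductSpace 𝕜 E] [CompleteSpace E] {p : E →L[𝕜] E} (hp : IsStarProjection p) :
    p.kerᗮ = p.range := by
  rw [← hp.isSelfAdjoint.isStarNormal.orthogonal_range, orthogonal_orthogonal_eq_closure,
    IsClosed.submodule_topologicalClosure_eq hp.isIdempotentElem.isClosed_range]

theorem VonNeumannAlgebra.exists_partialIsometry_of_inf_range_eq_bot (M : VonNeumannAlgebra H)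
    {E P : H →L[ℂ] H} (hEM : E ∈ M) (hPM : P ∈ M) (hE : IsStarProjection E)
    (hP : IsIdempotentElem P) (h : E.range ⊓ P.range = ⊥) :
    ∃ V ∈ M, star V * V = E ∧ (1 - P) * (V * star V) = V * star V := by
  set W := (1 - P) * E
  have hWM : W ∈ M := mul_mem (sub_mem (one_mem M) hPM) hEM
  refine ⟨polarIsometry W, M.polarIsometry_mem hWM, ?_, ?_⟩
  · rw [star_polarIsometry_mul_self, IsStarProjection.ext_iff isStarProjection_starProjection hE,
      range_starProjection, ker_one_sub_mul_eq_ker_of_inf_range_eq_bot h, hE.orthogonal_ker]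
  · have hWP : W.range ≤ P.ker := by
      rintro _ ⟨x, rfl⟩
      change (P * ((1 - P) * E)) x = 0
      rw [← mul_assoc, mul_sub, mul_one, hP.eq, sub_self, zero_mul, zero_apply]
    have hVP : (polarIsometry W).range ≤ P.ker :=
      (range_polarIsometry_le W).trans (topologicalClosure_minimal _ hWP P.isClosed_ker)
    rw [← mul_assoc]
    congr 1
    ext x
    have hPV : P (polarIsometry W x) = 0 := hVP ⟨x, rfl⟩
    simp [sub_apply, hPV]

theorem stmt16_general (M : VonNeumannAlgebra H) (E T A : H →L[ℂ] H)
    (hEM : E ∈ M) (hTM : T ∈ M)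
    (hEsa : IsSelfAdjoint E) (hEidem : IsIdempotentElem E)
    (c : ℝ) (hTA : ‖(T + A) * E‖ < c - ‖A‖) :
    LinearMap.range (E : H →ₗ[ℂ] H) ⊓ LinearMap.range (specGT (absCLM T) c : H →ₗ[ℂ] H) = ⊥ ∧
      ∃ V ∈ M, star V * V = E ∧
        (1 - specGT (absCLM T) c) * (V * star V) = V * star V := by
  have hE : IsStarProjection E := ⟨hEidem, hEsa⟩
  have hTE : ‖T * E‖ < c :=
    calc ‖T * E‖ = ‖(T + A) * E - A * E‖ := by rw [add_mul, add_sub_cancel_right]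
      _ ≤ ‖(T + A) * E‖ + ‖A‖ * ‖E‖ := by grw [norm_sub_le, norm_mul_le A E]
      _ ≤ ‖(T + A) * E‖ + ‖A‖ := by grw [hE.norm_le, mul_one]
      _ < c := by linarith
  have hbot := inf_range_specGT_absCLM_eq_bot hEidem hTE
  have hPM : specGT (absCLM T) c ∈ M := M.rangeProj_mem (M.cfc_mem (M.absCLM_mem hTM) _)
  exact ⟨hbot, M.exists_partialIsometry_of_inf_range_eq_bot hEM hPM hE
    (isStarProjection_rangeProj _).isIdempotentElem hbot⟩

/-- If `‖A‖ < c` and `‖(T + A) E‖ < c - ‖A‖`, then `E ∧ F^⊥ = 0` where `F` is the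
spectral projection of `|T|` for `[0, c]`, and consequently `E ≼ F` in `M`. -/
theorem stmt16 (M : VonNeumannAlgebra H) (E T A : H →L[ℂ] H)
    (hEM : E ∈ M) (hTM : T ∈ M) (hAM : A ∈ M)
    (hEsa : IsSelfAdjoint E) (hEidem : IsIdempotentElem E)
    (c : ℝ) (hc : 0 < c) (hA : ‖A‖ < c) (hTA : ‖(T + A) * E‖ < c - ‖A‖) :
    LinearMap.range (E : H →ₗ[ℂ] H) ⊓ LinearMap.range (specGT (absCLM T) c : H →ₗ[ℂ] H) = ⊥ ∧
      ∃ V ∈ M, star V * V = E ∧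
        (1 - specGT (absCLM T) c) * (V * star V) = V * star V :=
  stmt16_general M E T A hEM hTM hEsa hEidem c hTA
end
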